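/- Let P, Q be orthogonal projections, T = 2Q - I, U = (2P - I)T. If x is a vector with P x = 0, P T x = 0, and Q x ≠ 0, then Q x is an eigenvector of U with eigenvalue -1. -/

import Mathlib

/-! Since `T x = 2 Q x - x`, the hypotheses `P x = 0 = P T x` give `P Q x = 0` (the scalars have no
`2`-torsion). The reflection `T` fixes `Q x` because `Q` is idempotent, and `2 P - 1` negates
every vector killed by `P`. -/

open Matrix

namespace Matrix

variable {n R : Type*} [Fintype n] [DecidableEq n] [Ring R]

theorem two_nsmul_sub_one_mulVec (Q : Matrix n n R) (v : n → R) :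
    (2 • Q - 1) *ᵥ v = 2 • (Q *ᵥ v) - v := by
  rw [sub_mulVec, one_mulVec, smul_mulVec]

theorem two_nsmul_sub_one_mulVec_mulVec_of_idempotent {Q : Matrix n n R} (hQ : Q * Q = Q)
    (v : n → R) : (2 • Q - 1) *ᵥ (Q *ᵥ v) = Q *ᵥ v := by
  rw [two_nsmul_sub_one_mulVec, mulVec_mulVec, hQ, two_nsmul, add_sub_cancel_right]

theorem two_nsmul_sub_one_mulVec_of_mulVec_eq_zero {P : Matrix n n R} {v : n → R}
    (h : P *ᵥ v = 0) : (2 • P - 1) *ᵥ v = -v := by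
  rw [two_nsmul_sub_one_mulVec, h, smul_zero, zero_sub]

theorem mulVec_mulVec_eq_zero_of_mulVec_eq_zero_of_two_nsmul_sub_one
    [IsAddTorsionFree R] {P Q : Matrix n n R} {v : n → R} (hPv : P *ᵥ v = 0)
    (hPTv : P *ᵥ ((2 • Q - 1) *ᵥ v) = 0) : P *ᵥ (Q *ᵥ v) = 0 := by
  rwa [two_nsmul_sub_one_mulVec, mulVec_sub, hPv, sub_zero, mulVec_smul, two_nsmul_eq_zero]
    at hPTv

end Matrix

theorem stmt_8_general {m : ℕ} (P Q : Matrix (Fin m) (Fin m) ℂ)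
    (hQ : Q * Q = Q)
    (x : Fin m → ℂ)
    (hPx : P.mulVec x = 0) (hPTx : P.mulVec ((2 • Q - 1).mulVec x) = 0) :
    ((2 • P - 1) * (2 • Q - 1)).mulVec (Q.mulVec x) = -(Q.mulVec x) := by
  rw [← mulVec_mulVec, two_nsmul_sub_one_mulVec_mulVec_of_idempotent hQ]
  exact two_nsmul_sub_one_mulVec_of_mulVec_eq_zero
    (mulVec_mulVec_eq_zero_of_mulVec_eq_zero_of_two_nsmul_sub_one hPx hPTx)

theorem stmt_8 {m : ℕ} (P Q : Matrix (Fin m) (Fin m) ℂ)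
    (hP : P * P = P) (hPh : Pᴴ = P) (hQ : Q * Q = Q) (hQh : Qᴴ = Q)
    (x : Fin m → ℂ)
    (hPx : P.mulVec x = 0) (hPTx : P.mulVec ((2 • Q - 1).mulVec x) = 0)
    (hQx : Q.mulVec x ≠ 0) :
    ((2 • P - 1) * (2 • Q - 1)).mulVec (Q.mulVec x) = -(Q.mulVec x) :=
  stmt_8_general P Q hQ x hPx hPTx
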